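/- arXiv:2508.20648 — 5 statements merged into one kernel-verified Lean document; each statement's English description precedes it below -/
import Mathlib

section
/- Let d be a positive even integer and s a positive integer with 2s ≤ d. The sets C_ε, ε ∈ I^s, are pairwise disjoint, and the cardinality of their union equals Σ_{i=0}^{d/2 - s} C(d-s, i) + Σ_{k=1}^{s-1} 2^k · C(d-s, d/2 - s + k) + 2^s · Σ_{i=d/2}^{d-s} C(d-s, i), where C(n,i) denotes the binomial coefficient. -/
/-- Strings of length `d` over the alphabet `S = {0,1,*}`; `none` is the joker `*`. -/
abbrev JString (d : ℕ) := Fin d → Option Bool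

/-- The distance between two strings over `{0,1,*}`: the number of positions where both
entries are binary digits and they differ. -/
def jDist {d : ℕ} (u v : JString d) : ℕ :=
  (Finset.univ.filter fun i => ∃ a b : Bool, u i = some a ∧ v i = some b ∧ a ≠ b).card

/-- `nkd k d` is `n(k,d)`: the maximum size of a family of strings in `S^d` any two
distinct members of which are at distance at least `1` and at most `k`. -/
noncomputable def nkd (k d : ℕ) : ℕ :=
  sSup {m | ∃ F : Finset (JString d),
    (∀ u ∈ F, ∀ v ∈ F, u ≠ v → 1 ≤ jDist u v ∧ jDist u v ≤ k) ∧ F.card = m}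

/-- The weight `|x|` of a binary string. -/
def wt {n : ℕ} (x : Fin n → Bool) : ℕ := (Finset.univ.filter fun i => x i = true).card

/-- The inner product `⟨x,y⟩` of two binary strings. -/
def ip {n : ℕ} (x y : Fin n → Bool) : ℕ :=
  (Finset.univ.filter fun i => x i = true ∧ y i = true).card

/-- The antipode `x̄` of a binary string. -/
def antipode {n : ℕ} (x : Fin n → Bool) : Fin n → Bool := fun i => !(x i)

/-- `t(ε)` (0-based): the largest index at which `ε` differs from its last entry; for
nonconstant `ε` this is the unique (0-based) index `i` with `ε i ≠ ε (i+1) = ⋯ = ε (s-1)`. -/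
noncomputable def tIdx {s : ℕ} (ε : Fin s → Bool) : ℕ :=
  sSup {i : ℕ | ∃ h : i < s, ∃ h' : s - 1 < s, ε ⟨i, h⟩ ≠ ε ⟨s - 1, h'⟩}

/-- The set `A_ε = {ε_1} × ⋯ × {ε_{t(ε)}} × I^{s-1-t(ε)} ⊆ I^{s-1}`. -/
def Aset {s : ℕ} (ε : Fin s → Bool) : Set (Fin (s - 1) → Bool) :=
  {x | ∀ j : Fin (s - 1), (j : ℕ) ≤ tIdx ε →
    x j = ε ⟨(j : ℕ), Nat.lt_of_lt_of_le j.isLt (Nat.sub_le s 1)⟩}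

/-- The sets `X_k ⊆ I^{d-s}`: `X_0 = {|x| ≤ d/2 - s}`, `X_k = {|x| = d/2 - s + k}` for
`0 < k < s`, and `X_s = {|x| ≥ d/2}`. -/
def Xk (d s k : ℕ) : Set (Fin (d - s) → Bool) :=
  if k = 0 then {x | wt x ≤ d / 2 - s}
  else if k = s then {x | d / 2 ≤ wt x}
  else {x | wt x = d / 2 - s + k}

/-- The last `m` coordinates of a binary string of length `n` (junk values if `m > n`). -/
def suffix (m : ℕ) {n : ℕ} (x : Fin n → Bool) : Fin m → Bool :=
  fun j => if h : n - m + (j : ℕ) < n then x ⟨n - m + (j : ℕ), h⟩ else false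

/-- The set `B_ε ⊆ I^{d-s}`: `B_α = X_0`, `B_ω = X_s`, and for `ε ∉ {α,ω}`,
`B_ε = X_{|ε|} ∩ (I^{d-2s+1} × A_ε)`, identifying `I^{d-s}` with `I^{d-2s+1} × I^{s-1}`. -/
def Bset (d : ℕ) {s : ℕ} (ε : Fin s → Bool) : Set (Fin (d - s) → Bool) :=
  if ε = (fun _ => false) then Xk d s 0
  else if ε = (fun _ => true) then Xk d s s
  else Xk d s (wt ε) ∩ {x | suffix (s - 1) x ∈ Aset ε}

/-- Concatenation of a binary string of length `d - s` with a string over `{0,1,*}` of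
length `s`, producing a string over `{0,1,*}` of length `d`. -/
def glue {d s : ℕ} (x : Fin (d - s) → Bool) (w : Fin s → Option Bool) : JString d :=
  fun i => if h : (i : ℕ) < d - s then some (x ⟨(i : ℕ), h⟩)
    else if h' : (i : ℕ) - (d - s) < s then w ⟨(i : ℕ) - (d - s), h'⟩ else none

/-- The set `*^ε = *^{ε_1} × ⋯ × *^{ε_s} ⊆ S^s`, where `*^0 = {*}` and `*^1 = {0,1}`. -/
def starSet {s : ℕ} (ε : Fin s → Bool) : Set (Fin s → Option Bool) :=
  {w | ∀ j, if ε j = true then ∃ b : Bool, w j = some b else w j = none}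

/-- The set `C_ε = B_ε × *^ε ⊆ S^d`. -/
def Cset (d : ℕ) {s : ℕ} (ε : Fin s → Bool) : Set (JString d) :=
  {u | ∃ x ∈ Bset d ε, ∃ w ∈ starSet ε, u = glue x w}

/-! In a word of `C_ε` the last `s` letters are binary exactly at the positions where `ε` is `1`,
so the `C_ε` are disjoint and `|C_ε| = |B_ε| · 2^{|ε|}`. For `y ∈ I^{s-1}`, the nonconstant `ε`
with `y ∈ A_ε` are exactly the words `y_1 ⋯ y_t (¬y_t)^{s-t}`, `1 ≤ t < s`. Any two of them are
distinct and comparable in the pointwise order, so their weights are `s - 1` distinct values in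
`[1, s - 1]`: each weight `k` is attained exactly once. Hence for `0 < k < s` the sets `B_ε` with
`|ε| = k` partition `X_k`, which has `C(d - s, d/2 - s + k)` elements. -/

open Finset

section Weight

variable {n : ℕ}

lemma wt_le (x : Fin n → Bool) : wt x ≤ n :=
  (card_filter_le _ _).trans_eq (card_fin n)

@[simp] lemma wt_bot : wt (⊥ : Fin n → Bool) = 0 := by
  simp [wt]

@[simp] lemma wt_top : wt (⊤ : Fin n → Bool) = n := by
  simp [wt]

lemma wt_strictMono : StrictMono (wt : (Fin n → Bool) → ℕ) := by
  intro x y hxy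
  obtain ⟨hle, i, hi⟩ := Pi.lt_def.mp hxy
  refine card_lt_card ((ssubset_iff_of_subset fun j => ?_).mpr ⟨i, ?_⟩)
  · simpa using Bool.le_iff_imp.mp (hle j)
  · simpa using (Bool.lt_iff.mp hi).symm

lemma wt_pos_of_ne_bot {x : Fin n → Bool} (h : x ≠ ⊥) : 0 < wt x := by
  simpa using wt_strictMono (bot_lt_iff_ne_bot.mpr h)

lemma wt_lt_of_ne_top {x : Fin n → Bool} (h : x ≠ ⊤) : wt x < n := by
  simpa using wt_strictMono (lt_top_iff_ne_top.mpr h)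

lemma card_filter_wt_eq (i : ℕ) : #{x : Fin n → Bool | wt x = i} = n.choose i :=
  calc _ = #(powersetCard i (univ : Finset (Fin n))) := by
        refine card_nbij' (fun x => univ.filter (x · = true)) (fun S j => decide (j ∈ S))
          (fun x hx => ?_) (fun S hS => ?_) (fun x _ => by simp) (fun S _ => by simp)
        · rw [mem_coe, mem_filter] at hx
          simpa [wt, mem_powersetCard] using hx
        · rw [mem_coe, mem_powersetCard] at hS
          rw [mem_coe, mem_filter]
          simpa [wt] using hS
    _ = n.choose i := by simp

lemma ncard_setOf_wt_mem (T : Finset ℕ) :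
    {x : Fin n → Bool | wt x ∈ T}.ncard = ∑ i ∈ T, n.choose i := by
  rw [← coe_filter_univ, Set.ncard_coe_finset,
    card_eq_sum_card_fiberwise (f := wt) (t := T) (s := {x | wt x ∈ T})
      fun x hx => (mem_filter.mp hx).2]
  refine sum_congr rfl fun i hi => ?_
  rw [← card_filter_wt_eq, filter_filter]
  congr 1
  ext x
  simp only [mem_filter, mem_univ, true_and, and_iff_right_iff_imp]
  exact fun h => h ▸ hi

end Weight

section Glue

variable {d s : ℕ}

lemma glue_apply_left (x : Fin (d - s) → Bool) (w : Fin s → Option Bool) (i : Fin (d - s)) :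
    glue x w (i.castLE (Nat.sub_le d s)) = some (x i) := by
  simp [glue]

lemma glue_apply_right (hsd : s ≤ d) (x : Fin (d - s) → Bool) (w : Fin s → Option Bool)
    (j : Fin s) : glue x w ⟨d - s + j, by omega⟩ = w j := by
  simp [glue]

lemma glue_injective2 (hsd : s ≤ d) : Function.Injective2 (@glue d s) := by
  intro x x' w w' h
  refine ⟨funext fun i => ?_, funext fun j => ?_⟩
  · simpa [glue_apply_left] using congrFun h (i.castLE (Nat.sub_le d s))
  · simpa [glue_apply_right hsd] using congrFun h ⟨d - s + j, by omega⟩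

lemma isSome_of_mem_starSet {ε : Fin s → Bool} {w : Fin s → Option Bool} (hw : w ∈ starSet ε)
    (j : Fin s) : (w j).isSome = ε j := by
  have := hw j
  cases h : ε j <;> simp_all [Option.isSome_iff_exists]

lemma starSet_eq_piFinset (ε : Fin s → Bool) :
    starSet ε = Fintype.piFinset fun j => if ε j then {some true, some false} else {none} := by
  ext w
  rw [mem_coe, Fintype.mem_piFinset]
  refine forall_congr' fun j => ?_
  cases ε j <;> rcases w j with _ | _ | _ <;> simp

lemma ncard_starSet (ε : Fin s → Bool) : (starSet ε).ncard = 2 ^ wt ε := by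
  rw [starSet_eq_piFinset, Set.ncard_coe_finset, Fintype.card_piFinset]
  simp [apply_ite, prod_ite, wt]

lemma Cset_eq_image (ε : Fin s → Bool) :
    Cset d ε = Function.uncurry glue '' (Bset d ε ×ˢ starSet ε) := by
  ext u
  simp [Cset, eq_comm]

lemma ncard_Cset (hsd : s ≤ d) (ε : Fin s → Bool) :
    (Cset d ε).ncard = (Bset d ε).ncard * 2 ^ wt ε := by
  rw [Cset_eq_image, Set.ncard_image_of_injective _ (glue_injective2 hsd).uncurry,
    Set.ncard_prod, ncard_starSet]

lemma Cset_pairwise_disjoint (hsd : s ≤ d) :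
    Pairwise fun ε γ : Fin s → Bool => Disjoint (Cset d ε) (Cset d γ) := by
  intro ε γ hne
  refine Set.disjoint_left.mpr ?_
  rintro _ ⟨x, -, w, hw, rfl⟩ ⟨x', -, w', hw', h⟩
  obtain ⟨-, rfl⟩ := glue_injective2 hsd h
  exact hne (funext fun j => (isSome_of_mem_starSet hw j).symm.trans (isSome_of_mem_starSet hw' j))

lemma ncard_iUnion_Cset (hsd : s ≤ d) :
    (⋃ ε : Fin s → Bool, Cset d ε).ncard = ∑ ε : Fin s → Bool, (Bset d ε).ncard * 2 ^ wt ε := by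
  rw [Set.ncard_iUnion_of_finite (fun _ => Set.toFinite _) (Cset_pairwise_disjoint hsd),
    finsum_eq_sum_of_fintype]
  exact sum_congr rfl fun ε _ => ncard_Cset hsd ε

end Glue

section Pattern

variable {r : ℕ}

/-- `y_0 ⋯ y_t` followed by `r - t` copies of `¬ y_t`: the nonconstant `ε` with `t(ε) = t` and
`y ∈ A_ε`. -/
def epsOf (y : Fin r → Bool) (t : Fin r) : Fin (r + 1) → Bool :=
  fun i => if h : (i : ℕ) ≤ t then y ⟨i, h.trans_lt t.isLt⟩ else !y t

variable (y : Fin r → Bool) (t : Fin r)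

lemma epsOf_of_le {i : Fin (r + 1)} (h : (i : ℕ) ≤ t) :
    epsOf y t i = y ⟨i, h.trans_lt t.isLt⟩ :=
  dif_pos h

lemma epsOf_of_lt {i : Fin (r + 1)} (h : (t : ℕ) < i) : epsOf y t i = !y t :=
  dif_neg h.not_ge

lemma epsOf_ne_const (b : Bool) : epsOf y t ≠ fun _ => b := by
  intro h
  have hself := congrFun h t.castSucc
  have hlast := congrFun h (Fin.last r)
  rw [epsOf_of_le y t (i := t.castSucc) le_rfl] at hself
  rw [epsOf_of_lt y t (by simp)] at hlast
  simp [← hlast] at hself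

lemma tIdx_epsOf : tIdx (epsOf y t) = t := by
  apply IsGreatest.csSup_eq
  refine ⟨⟨by omega, by omega, ?_⟩, ?_⟩
  · rw [epsOf_of_le y t le_rfl, epsOf_of_lt y t (by simp)]
    simp
  · rintro i ⟨hi, hr, hne⟩
    by_contra! hti
    exact hne ((epsOf_of_lt y t hti).trans (epsOf_of_lt y t (by simp)).symm)

lemma mem_Aset_epsOf : y ∈ Aset (epsOf y t) := by
  intro j hj
  rw [tIdx_epsOf] at hj
  exact (epsOf_of_le y t (i := ⟨j, by omega⟩) hj).symm

lemma epsOf_injective : Function.Injective (epsOf y) := fun t t' h =>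
  Fin.ext (by simpa only [tIdx_epsOf] using congrArg tIdx h)

lemma epsOf_le_or_le {t t' : Fin r} (h : t ≤ t') :
    epsOf y t ≤ epsOf y t' ∨ epsOf y t' ≤ epsOf y t := by
  cases hy : y t
  · refine Or.inr fun i => ?_
    by_cases hi : (i : ℕ) ≤ t
    · rw [epsOf_of_le y t hi, epsOf_of_le y t' (hi.trans h)]
    · rw [epsOf_of_lt y t (not_le.mp hi), hy]
      exact Bool.le_true _
  · refine Or.inl fun i => ?_
    by_cases hi : (i : ℕ) ≤ t
    · rw [epsOf_of_le y t hi, epsOf_of_le y t' (hi.trans h)]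
    · rw [epsOf_of_lt y t (not_le.mp hi), hy]
      exact Bool.false_le _

lemma wt_epsOf_injective : Function.Injective fun t => wt (epsOf y t) := by
  have key : ∀ t t', t ≤ t' → wt (epsOf y t) = wt (epsOf y t') → t = t' := by
    intro t t' htt h
    by_contra hne
    have hne' := (epsOf_injective y).ne hne
    rcases epsOf_le_or_le y htt with hle | hle
    · exact (wt_strictMono (hle.lt_of_ne hne')).ne h
    · exact (wt_strictMono (hle.lt_of_ne hne'.symm)).ne' h
  intro t t' h
  rcases le_total t t' with htt | htt
  exacts [key t t' htt h, (key t' t htt h.symm).symm]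

lemma existsUnique_wt_epsOf_eq {k : ℕ} (hk : k ∈ Icc 1 r) : ∃! t, wt (epsOf y t) = k := by
  have hmaps : Set.MapsTo (fun t => wt (epsOf y t)) (univ : Finset (Fin r)) (Icc 1 r) :=
    fun t _ => by
      have h0 := wt_pos_of_ne_bot (epsOf_ne_const y t false)
      have h1 := wt_lt_of_ne_top (epsOf_ne_const y t true)
      simp only [coe_Icc, Set.mem_Icc]
      omega
  obtain ⟨t, -, ht⟩ := surjOn_of_injOn_of_card_le _ hmaps (wt_epsOf_injective y).injOn
    (by simp) hk
  exact ⟨t, ht, fun t' ht' => wt_epsOf_injective y (ht'.trans ht.symm)⟩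

lemma exists_ne_last_of_ne_bot_of_ne_top {ε : Fin (r + 1) → Bool} (h0 : ε ≠ ⊥) (h1 : ε ≠ ⊤) :
    ∃ i, ε i ≠ ε (Fin.last r) := by
  by_contra! hconst
  cases hlast : ε (Fin.last r)
  · exact h0 (funext fun i => (hconst i).trans hlast)
  · exact h1 (funext fun i => (hconst i).trans hlast)

lemma tIdx_spec {ε : Fin (r + 1) → Bool} (h0 : ε ≠ ⊥) (h1 : ε ≠ ⊤) :
    ∃ ht : tIdx ε < r, ε (Fin.castSucc ⟨tIdx ε, ht⟩) ≠ ε (Fin.last r) ∧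
      ∀ i : Fin (r + 1), tIdx ε < i → ε i = ε (Fin.last r) := by
  let S : Set ℕ := {i | ∃ h : i < r + 1, ∃ h' : r + 1 - 1 < r + 1, ε ⟨i, h⟩ ≠ ε ⟨r + 1 - 1, h'⟩}
  have hS : tIdx ε = sSup S := rfl
  have hbdd : BddAbove S := ⟨r, fun i ⟨h, _⟩ => by omega⟩
  obtain ⟨i, hi⟩ := exists_ne_last_of_ne_bot_of_ne_top h0 h1
  obtain ⟨hlt, _, hne⟩ : tIdx ε ∈ S := Nat.sSup_mem ⟨i, i.isLt, by omega, hi⟩ hbdd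
  have ht : tIdx ε < r :=
    lt_of_le_of_ne (by omega) fun h => hne (congrArg ε (Fin.ext h))
  refine ⟨ht, hne, fun i hi => ?_⟩
  by_contra h
  exact hi.not_ge (hS ▸ le_csSup hbdd ⟨i.isLt, by omega, h⟩)

lemma exists_epsOf_eq {ε : Fin (r + 1) → Bool} (h0 : ε ≠ ⊥) (h1 : ε ≠ ⊤) (hA : y ∈ Aset ε) :
    ∃ t, epsOf y t = ε := by
  obtain ⟨ht, hne, hconst⟩ := tIdx_spec h0 h1
  refine ⟨⟨tIdx ε, ht⟩, funext fun i => ?_⟩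
  rcases le_or_gt (i : ℕ) (tIdx ε) with hi | hi
  · rw [epsOf_of_le y _ hi]
    exact hA ⟨i, by omega⟩ hi
  · rw [epsOf_of_lt y _ hi, hconst i hi, hA ⟨tIdx ε, ht⟩ le_rfl]
    exact (Bool.eq_not_iff.mpr hne.symm).symm

open scoped Classical in
lemma card_filter_mem_Aset_of_wt_eq {k : ℕ} (hk : k ∈ Icc 1 r) :
    #{ε ∈ {ε ∈ (univ \ {⊥, ⊤} : Finset (Fin (r + 1) → Bool)) | wt ε = k} |
      y ∈ Aset (s := r + 1) ε} = 1 := by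
  obtain ⟨t, ht, huniq⟩ := existsUnique_wt_epsOf_eq y hk
  refine card_eq_one.mpr ⟨epsOf y t, ext fun ε => ?_⟩
  simp only [mem_filter, mem_sdiff, mem_univ, mem_insert, mem_singleton, true_and, not_or]
  constructor
  · rintro ⟨⟨⟨h0, h1⟩, hwt⟩, hA⟩
    obtain ⟨t', rfl⟩ := exists_epsOf_eq y h0 h1 hA
    rw [huniq t' hwt]
  · rintro rfl
    exact ⟨⟨⟨epsOf_ne_const y t false, epsOf_ne_const y t true⟩, ht⟩, mem_Aset_epsOf y t⟩

end Pattern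

section Count

variable {d s : ℕ}

lemma Bset_bot : Bset d (⊥ : Fin s → Bool) = {x | wt x ≤ d / 2 - s} := by
  rw [Bset, if_pos (show (⊥ : Fin s → Bool) = fun _ => false from rfl), Xk, if_pos rfl]

lemma Bset_top (hs : s ≠ 0) : Bset d (⊤ : Fin s → Bool) = {x | d / 2 ≤ wt x} := by
  have htop : (⊤ : Fin s → Bool) ≠ fun _ => false := fun h => by
    simpa using congrFun h ⟨0, Nat.pos_of_ne_zero hs⟩
  rw [Bset, if_neg htop, if_pos (show (⊤ : Fin s → Bool) = fun _ => true from rfl), Xk,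
    if_neg hs, if_pos rfl]

lemma Bset_of_ne_bot_of_ne_top {ε : Fin s → Bool} (h0 : ε ≠ ⊥) (h1 : ε ≠ ⊤) :
    Bset d ε = {x | wt x = d / 2 - s + wt ε ∧ suffix (s - 1) x ∈ Aset ε} := by
  rw [Bset, if_neg (show ε ≠ fun _ => false from h0), if_neg (show ε ≠ fun _ => true from h1),
    Xk, if_neg (wt_pos_of_ne_bot h0).ne', if_neg (wt_lt_of_ne_top h1).ne]
  rfl

open scoped Classical in
lemma sum_ncard_Bset_mul_of_ne_bot_of_ne_top (r : ℕ) :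
    ∑ ε ∈ (univ \ {⊥, ⊤} : Finset (Fin (r + 1) → Bool)), (Bset d ε).ncard * 2 ^ wt ε
      = ∑ k ∈ Icc 1 r, 2 ^ k * (d - (r + 1)).choose (d / 2 - (r + 1) + k) := by
  have hwt : ∀ ε ∈ (univ \ {⊥, ⊤} : Finset (Fin (r + 1) → Bool)), wt ε ∈ Icc 1 r := by
    intro ε hε
    simp only [mem_sdiff, mem_univ, mem_insert, mem_singleton, true_and, not_or] at hε
    have := wt_pos_of_ne_bot hε.1
    have := wt_lt_of_ne_top hε.2
    simp only [mem_Icc]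
    omega
  rw [← sum_fiberwise_of_maps_to hwt]
  refine sum_congr rfl fun k hk => ?_
  set E := {ε ∈ (univ \ {⊥, ⊤} : Finset (Fin (r + 1) → Bool)) | wt ε = k}
  set X : Finset (Fin (d - (r + 1)) → Bool) := {x | wt x = d / 2 - (r + 1) + k}
  calc ∑ ε ∈ E, (Bset d ε).ncard * 2 ^ wt ε
      = ∑ ε ∈ E, #{x ∈ X | suffix r x ∈ Aset (s := r + 1) ε} * 2 ^ k := by
        refine sum_congr rfl fun ε hε => ?_
        simp only [E, mem_filter, mem_sdiff, mem_univ, mem_insert, mem_singleton, true_and,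
          not_or] at hε
        rw [Bset_of_ne_bot_of_ne_top hε.1.1 hε.1.2, hε.2, ← Set.ncard_coe_finset]
        congr
        ext x
        simp [X, and_comm]
    _ = 2 ^ k * ∑ x ∈ X, #{ε ∈ E | suffix r x ∈ Aset (s := r + 1) ε} := by
        rw [← sum_mul, mul_comm]
        exact congrArg _ (sum_card_bipartiteAbove_eq_sum_card_bipartiteBelow _)
    _ = 2 ^ k * #X := by
        simp only [E, card_filter_mem_Aset_of_wt_eq _ hk, sum_const, smul_eq_mul, mul_one]
    _ = 2 ^ k * (d - (r + 1)).choose (d / 2 - (r + 1) + k) := by rw [card_filter_wt_eq]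

lemma sum_ncard_Bset_mul (hs : 0 < s) :
    ∑ ε : Fin s → Bool, (Bset d ε).ncard * 2 ^ wt ε =
      ∑ i ∈ range (d / 2 - s + 1), (d - s).choose i
        + ∑ k ∈ Icc 1 (s - 1), 2 ^ k * (d - s).choose (d / 2 - s + k)
        + 2 ^ s * ∑ i ∈ Icc (d / 2) (d - s), (d - s).choose i := by
  obtain ⟨r, rfl⟩ : ∃ r, s = r + 1 := ⟨s - 1, by omega⟩
  have hbot : {x : Fin (d - (r + 1)) → Bool | wt x ≤ d / 2 - (r + 1)} =
      {x | wt x ∈ range (d / 2 - (r + 1) + 1)} := by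
    ext x
    simp
  have htop : {x : Fin (d - (r + 1)) → Bool | d / 2 ≤ wt x} =
      {x | wt x ∈ Icc (d / 2) (d - (r + 1))} := by
    ext x
    simp [wt_le x]
  rw [← sum_sdiff (subset_univ {⊥, ⊤}), sum_pair bot_ne_top,
    sum_ncard_Bset_mul_of_ne_bot_of_ne_top, Bset_bot, Bset_top r.succ_ne_zero, hbot, htop,
    ncard_setOf_wt_mem, ncard_setOf_wt_mem, wt_bot, wt_top, Nat.add_sub_cancel]
  ring

end Count

theorem Cset_disjoint_card_general (d s : ℕ) (hs : 0 < s)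
    (hsd : 2 * s ≤ d) :
    (∀ ε γ : Fin s → Bool, ε ≠ γ → Cset d ε ∩ Cset d γ = ∅) ∧
    (⋃ ε : Fin s → Bool, Cset d ε).ncard =
      ∑ i ∈ Finset.range (d / 2 - s + 1), (d - s).choose i
        + ∑ k ∈ Finset.Icc 1 (s - 1), 2 ^ k * (d - s).choose (d / 2 - s + k)
        + 2 ^ s * ∑ i ∈ Finset.Icc (d / 2) (d - s), (d - s).choose i := by
  have hsd' : s ≤ d := by omega
  refine ⟨fun ε γ h => Set.disjoint_iff_inter_eq_empty.mp (Cset_pairwise_disjoint hsd' h), ?_⟩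
  rw [ncard_iUnion_Cset hsd', sum_ncard_Bset_mul hs]

/-- Let `d` be a positive even integer and `s` positive with `2s ≤ d`.
The sets `C_ε`, `ε ∈ I^s`, are pairwise disjoint and the cardinality of their union is
`Σ_{i=0}^{d/2-s} C(d-s,i) + Σ_{k=1}^{s-1} 2^k C(d-s, d/2-s+k) + 2^s Σ_{i=d/2}^{d-s} C(d-s,i)`. -/
theorem Cset_disjoint_card (d s : ℕ) (hd : 0 < d) (hde : Even d) (hs : 0 < s)
    (hsd : 2 * s ≤ d) :
    (∀ ε γ : Fin s → Bool, ε ≠ γ → Cset d ε ∩ Cset d γ = ∅) ∧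
    (⋃ ε : Fin s → Bool, Cset d ε).ncard =
      ∑ i ∈ Finset.range (d / 2 - s + 1), (d - s).choose i
        + ∑ k ∈ Finset.Icc 1 (s - 1), 2 ^ k * (d - s).choose (d / 2 - s + k)
        + 2 ^ s * ∑ i ∈ Finset.Icc (d / 2) (d - s), (d - s).choose i :=
  Cset_disjoint_card_general d s hs hsd
end

section
/- Let d be a positive even integer and s a positive integer with 2s ≤ d. Every two distinct elements u, v of the set (X_0 × {*}^s) ∪ (X_s × I^s) ⊆ S^d satisfy 1 ≤ dist(u,v) ≤ d - s; consequently, n(d-s, d) ≥ Σ_{i=0}^{d/2 - s} C(d-s, i) + 2^s · Σ_{i=d/2}^{d-s} C(d-s, i). -/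
/-- The set `(X_0 × {*}^s) ∪ (X_s × I^s) ⊆ S^d`: strings whose first `d-s` symbols lie in
`X_0` and whose last `s` symbols are jokers, together with strings whose first `d-s`
symbols lie in `X_s` and whose last `s` symbols are arbitrary binary digits. -/
def Dset (d s : ℕ) : Set (JString d) :=
  {u | ∃ x ∈ Xk d s 0, u = glue x (fun _ => (none : Option Bool))} ∪
  {u | ∃ x ∈ Xk d s s, ∃ z : Fin s → Bool, u = glue x (fun j => some (z j))}

/-! Write each string as `glue x w` with prefix `x ∈ I^{d-s}`; then
`dist (glue x w) (glue y w') = hammingDist x y + dist w w'`. For `x ∈ X_0` and `y ∈ X_s` the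
prefixes differ in at least `|y| - |x| ≥ s` places. Two prefixes in `X_s` differ only where one of
them has a `0`, i.e. in at most `2 (d - s - d/2) = d - 2s` places (this is where `d` even is
needed), and the binary suffixes add at most `s`. -/

open Finset

section JokerDistance

variable {m n : ℕ}

lemma jDist_eq_sum (u v : JString n) :
    jDist u v = ∑ i, if ∃ a b : Bool, u i = some a ∧ v i = some b ∧ a ≠ b then 1 else 0 :=
  card_filter _ _

lemma jDist_append (u v : JString m) (u' v' : JString n) :
    jDist (Fin.append u u') (Fin.append v v') = jDist u v + jDist u' v' := by
  simp only [jDist_eq_sum, Fin.sum_univ_add, Fin.append_left, Fin.append_right]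

lemma jDist_comp_cast (h : m = n) (u v : JString n) :
    jDist (u ∘ Fin.cast h) (v ∘ Fin.cast h) = jDist u v := by
  subst h; rfl

lemma jDist_some (x y : Fin n → Bool) :
    jDist (fun i => some (x i)) (fun i => some (y i)) = hammingDist x y := by
  simp [jDist, hammingDist]

lemma jDist_none_left (w : JString n) : jDist (fun _ => none) w = 0 := by
  simp [jDist]

lemma jDist_none_right (w : JString n) : jDist w (fun _ => none) = 0 := by
  simp [jDist]

end JokerDistance

section Glue

variable {d s : ℕ}

lemma glue_eq_append (hsd : s ≤ d) (x : Fin (d - s) → Bool) (w : Fin s → Option Bool) :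
    glue x w = Fin.append (fun i => some (x i)) w ∘ Fin.cast (Nat.sub_add_cancel hsd).symm := by
  funext i
  by_cases hi : (i : ℕ) < d - s
  · rw [glue, dif_pos hi, Function.comp_apply,
      show Fin.cast _ i = Fin.castAdd s ⟨i, hi⟩ from rfl, Fin.append_left]
  · have hi' : (i : ℕ) - (d - s) < s := by omega
    rw [glue, dif_neg hi, dif_pos hi', Function.comp_apply,
      show Fin.cast _ i = Fin.natAdd (d - s) ⟨i - (d - s), hi'⟩ from Fin.ext (by simp; omega),
      Fin.append_right]

lemma jDist_glue (hsd : s ≤ d) (x y : Fin (d - s) → Bool) (w w' : Fin s → Option Bool) :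
    jDist (glue x w) (glue y w') = hammingDist x y + jDist w w' := by
  rw [glue_eq_append hsd, glue_eq_append hsd, jDist_comp_cast, jDist_append, jDist_some]

lemma glue_inj (hsd : s ≤ d) {x y : Fin (d - s) → Bool} {w w' : Fin s → Option Bool} :
    glue x w = glue y w' ↔ x = y ∧ w = w' := by
  rw [glue_eq_append hsd, glue_eq_append hsd]
  constructor
  · intro h
    have happ : Fin.append (fun i => some (x i)) w = Fin.append (fun i => some (y i)) w' :=
      (finCongr (Nat.sub_add_cancel hsd).symm).surjective.injective_comp_right h
    exact ⟨funext fun i => by simpa using congrFun happ (Fin.castAdd s i),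
      funext fun j => by simpa using congrFun happ (Fin.natAdd (d - s) j)⟩
  · rintro ⟨rfl, rfl⟩
    rfl

end Glue

section Weight

variable {n : ℕ}

lemma hammingDist_le_card_fin (x y : Fin n → Bool) : hammingDist x y ≤ n :=
  hammingDist_le_card_fintype.trans_eq (Fintype.card_fin n)

lemma wt_eq_hammingDist_false (x : Fin n → Bool) : wt x = hammingDist x fun _ => false := by
  simp [wt, hammingDist]

lemma hammingDist_true_eq_sub_wt (x : Fin n → Bool) :
    (hammingDist x fun _ => true) = n - wt x := by
  have := card_filter_add_card_filter_not (s := (univ : Finset (Fin n))) fun i => x i = true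
  simp only [card_univ, Fintype.card_fin] at this
  simp only [hammingDist, wt, ne_eq]
  omega

lemma wt_le_wt_add_hammingDist (x y : Fin n → Bool) : wt y ≤ wt x + hammingDist x y := by
  rw [wt_eq_hammingDist_false, wt_eq_hammingDist_false, add_comm, hammingDist_comm x]
  exact hammingDist_triangle y x _

lemma hammingDist_le_sub_wt_add_sub_wt (x y : Fin n → Bool) :
    hammingDist x y ≤ (n - wt x) + (n - wt y) := by
  rw [← hammingDist_true_eq_sub_wt, ← hammingDist_true_eq_sub_wt, hammingDist_comm y]
  exact hammingDist_triangle x _ y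

lemma card_filter_wt_mem (S : Finset ℕ) :
    #{x : Fin n → Bool | wt x ∈ S} = ∑ i ∈ S, n.choose i := by
  rw [card_eq_sum_card_fiberwise (s := {x : Fin n → Bool | wt x ∈ S}) (t := S)
    fun x hx => (mem_filter.1 hx).2]
  refine sum_congr rfl fun i hi => ?_
  rw [← card_filter_wt_eq, filter_filter]
  congr 1
  ext x
  simp only [mem_filter, mem_univ, true_and, and_iff_right_iff_imp]
  rintro rfl
  exact hi

lemma card_filter_wt_le (m : ℕ) :
    #{x : Fin n → Bool | wt x ≤ m} = ∑ i ∈ range (m + 1), n.choose i := by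
  rw [← card_filter_wt_mem]
  simp

lemma card_filter_le_wt (m : ℕ) :
    #{x : Fin n → Bool | m ≤ wt x} = ∑ i ∈ Icc m n, n.choose i := by
  rw [← card_filter_wt_mem]
  simp [wt_le]

end Weight

/-- The families over which `nkd k d` takes its supremum. -/
def IsNeighborly {d : ℕ} (k : ℕ) (F : Set (JString d)) : Prop :=
  ∀ u ∈ F, ∀ v ∈ F, u ≠ v → 1 ≤ jDist u v ∧ jDist u v ≤ k

lemma card_le_nkd {k d : ℕ} {F : Finset (JString d)}
    (hF : IsNeighborly k (F : Set (JString d))) :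
    #F ≤ nkd k d :=
  le_csSup ⟨Fintype.card (JString d), by rintro _ ⟨G, -, rfl⟩; exact card_le_univ G⟩ ⟨F, hF, rfl⟩

section Dset

variable {d s : ℕ}

lemma mem_Xk_zero {x : Fin (d - s) → Bool} : x ∈ Xk d s 0 ↔ wt x ≤ d / 2 - s := by
  simp [Xk]

lemma mem_Xk_self (hs : s ≠ 0) {x : Fin (d - s) → Bool} : x ∈ Xk d s s ↔ d / 2 ≤ wt x := by
  simp [Xk, hs]

theorem isNeighborly_Dset (hde : Even d) (hs : 0 < s) (hsd : 2 * s ≤ d) :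
    IsNeighborly (d - s) (Dset d s) := by
  have hsd' : s ≤ d := by omega
  have hd : 2 * (d / 2) = d := Nat.two_mul_div_two_of_even hde
  rintro _ (⟨x, hx, rfl⟩ | ⟨x, hx, z, rfl⟩) _ (⟨y, hy, rfl⟩ | ⟨y, hy, z', rfl⟩) huv <;>
    simp only [mem_Xk_zero, mem_Xk_self hs.ne'] at hx hy <;>
    simp only [jDist_glue hsd', jDist_none_left, jDist_none_right, jDist_some, add_zero]
  · have := hammingDist_pos.2 fun h : x = y => huv (h ▸ rfl)
    have := hammingDist_le_card_fin x y
    omega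
  · have := wt_le_wt_add_hammingDist x y
    have := hammingDist_le_card_fin x y
    omega
  · have := wt_le_wt_add_hammingDist y x
    have := hammingDist_le_card_fin y x
    rw [hammingDist_comm]
    omega
  · have hne : x ≠ y ∨ z ≠ z' := by
      by_contra! h
      exact huv (by rw [h.1, h.2])
    have := hammingDist_le_sub_wt_add_sub_wt x y
    have := hammingDist_le_card_fin z z'
    have := wt_le x
    have := wt_le y
    rcases hne with h | h <;> have := hammingDist_pos.2 h <;> omega

def dFinset (d s : ℕ) : Finset (JString d) :=
  ({x | wt x ≤ d / 2 - s} : Finset (Fin (d - s) → Bool)).image (fun x => glue x fun _ => none) ∪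
    (({x | d / 2 ≤ wt x} : Finset (Fin (d - s) → Bool)) ×ˢ univ).image
      fun p : (Fin (d - s) → Bool) × (Fin s → Bool) => glue p.1 fun j => some (p.2 j)

lemma coe_dFinset (hs : 0 < s) : (dFinset d s : Set (JString d)) = Dset d s := by
  ext u
  simp [dFinset, Dset, mem_Xk_zero, mem_Xk_self hs.ne', eq_comm]

lemma card_dFinset (hs : 0 < s) (hsd : s ≤ d) :
    #(dFinset d s) = ∑ i ∈ range (d / 2 - s + 1), (d - s).choose i
      + 2 ^ s * ∑ i ∈ Icc (d / 2) (d - s), (d - s).choose i := by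
  rw [dFinset, card_union_of_disjoint, card_image_of_injective, card_image_of_injective,
    card_product, card_filter_wt_le, card_filter_le_wt, card_univ, Fintype.card_fun,
    Fintype.card_bool, Fintype.card_fin, mul_comm]
  · rintro ⟨x, z⟩ ⟨y, z'⟩ h
    obtain ⟨rfl, hz⟩ := (glue_inj hsd).1 h
    simpa [funext_iff] using hz
  · exact fun x y h => ((glue_inj hsd).1 h).1
  · simp only [disjoint_left, mem_image, not_exists, not_and]
    rintro _ ⟨x, -, rfl⟩ ⟨_, z⟩ - h
    exact Option.some_ne_none _ (congrFun ((glue_inj hsd).1 h).2 ⟨0, hs⟩)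

end Dset

theorem Dset_neighborly_and_bound_general (d s : ℕ) (hde : Even d) (hs : 0 < s)
    (hsd : 2 * s ≤ d) :
    (∀ u ∈ Dset d s, ∀ v ∈ Dset d s, u ≠ v → 1 ≤ jDist u v ∧ jDist u v ≤ d - s) ∧
    ∑ i ∈ Finset.range (d / 2 - s + 1), (d - s).choose i
        + 2 ^ s * ∑ i ∈ Finset.Icc (d / 2) (d - s), (d - s).choose i
      ≤ nkd (d - s) d := by
  refine ⟨isNeighborly_Dset hde hs hsd, ?_⟩
  rw [← card_dFinset hs (by omega)]
  exact card_le_nkd (by rw [coe_dFinset hs]; exact isNeighborly_Dset hde hs hsd)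

/-- Let `d` be a positive even integer and `s` positive with `2s ≤ d`.
Any two distinct elements of `(X_0 × {*}^s) ∪ (X_s × I^s)` are at distance between `1` and
`d - s`; consequently `n(d-s,d) ≥ Σ_{i=0}^{d/2-s} C(d-s,i) + 2^s Σ_{i=d/2}^{d-s} C(d-s,i)`. -/
theorem Dset_neighborly_and_bound (d s : ℕ) (hd : 0 < d) (hde : Even d) (hs : 0 < s)
    (hsd : 2 * s ≤ d) :
    (∀ u ∈ Dset d s, ∀ v ∈ Dset d s, u ≠ v → 1 ≤ jDist u v ∧ jDist u v ≤ d - s) ∧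
    ∑ i ∈ Finset.range (d / 2 - s + 1), (d - s).choose i
        + 2 ^ s * ∑ i ∈ Finset.Icc (d / 2) (d - s), (d - s).choose i
      ≤ nkd (d - s) d :=
  Dset_neighborly_and_bound_general d s hde hs hsd
end

section
/- Let d be even and s a positive integer with 2s ≤ d, and let γ ∈ I^s \ {α, ω}. Then for every x ∈ B_α and y ∈ B_{γ̄} (where γ̄ is the antipode of γ), the Hamming distance satisfies dist(x,y) ≤ d - s - |γ|. -/
/-! Every string in `B_α` has weight at most `d/2 - s` and every string in `B_{γ̄}` has weight
`d/2 - |γ|`; two strings differ only where one of them has a `1`, so their distance is at most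
the sum of the weights, `d - s - |γ|`. -/

lemma wt_le_card {n : ℕ} (x : Fin n → Bool) : wt x ≤ n := by
  simpa [wt] using Finset.card_filter_le Finset.univ (fun i => x i = true)

lemma wt_eq_zero_iff {n : ℕ} (x : Fin n → Bool) : wt x = 0 ↔ x = fun _ => false := by
  simp [wt, funext_iff]

lemma wt_eq_card_iff {n : ℕ} (x : Fin n → Bool) : wt x = n ↔ x = fun _ => true := by
  have h := Finset.card_filter_eq_iff (s := (Finset.univ : Finset (Fin n)))
    (p := fun i => x i = true)
  rw [Finset.card_univ, Fintype.card_fin] at h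
  simpa [wt, funext_iff] using h

lemma wt_antipode {n : ℕ} (x : Fin n → Bool) : wt (antipode x) = n - wt x := by
  have h := Finset.card_filter_add_card_filter_not (s := (Finset.univ : Finset (Fin n)))
    (p := fun i => x i = true)
  rw [Finset.card_univ, Fintype.card_fin] at h
  have h_not : wt (antipode x) = (Finset.univ.filter fun i => ¬ x i = true).card := by
    simp [wt, antipode]
  rw [h_not, wt]
  omega

lemma antipode_eq_true_iff {n : ℕ} (x : Fin n → Bool) :
    antipode x = (fun _ => true) ↔ x = fun _ => false := by
  simp [antipode, funext_iff]

lemma hammingDist_le_wt_add_wt {n : ℕ} (x y : Fin n → Bool) :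
    hammingDist x y ≤ wt x + wt y := by
  have hsub : (Finset.univ.filter fun i => x i ≠ y i) ⊆
      (Finset.univ.filter fun i => x i = true) ∪ (Finset.univ.filter fun i => y i = true) := by
    intro i
    simp only [Finset.mem_filter, Finset.mem_union, Finset.mem_univ, true_and]
    cases x i <;> cases y i <;> decide
  exact (Finset.card_le_card hsub).trans (Finset.card_union_le _ _)

lemma wt_le_of_mem_Bset {d s : ℕ} {ε : Fin s → Bool} (hε : ε ≠ fun _ => true)
    {y : Fin (d - s) → Bool} (hy : y ∈ Bset d ε) : wt y ≤ d / 2 - s + wt ε := by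
  by_cases hα : ε = fun _ => false
  · simp only [Bset, if_pos hα, Xk] at hy
    exact hy.trans (Nat.le_add_right _ _)
  · have h0 : wt ε ≠ 0 := (wt_eq_zero_iff ε).not.mpr hα
    have hs : wt ε ≠ s := (wt_eq_card_iff ε).not.mpr hε
    simp only [Bset, if_neg hα, if_neg hε, Xk, if_neg h0, if_neg hs] at hy
    exact hy.1.le

theorem dist_Balpha_Bgammabar_general (d s : ℕ) (hsd : 2 * s ≤ d)
    (γ : Fin s → Bool) (hγα : γ ≠ fun _ => false) :
    ∀ x ∈ Bset d (fun _ => false), ∀ y ∈ Bset d (antipode γ),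
      hammingDist x y ≤ d - s - wt γ := by
  intro x hx y hy
  have hx' : wt x ≤ d / 2 - s := by simpa [Bset, Xk] using hx
  have hy' := wt_le_of_mem_Bset ((antipode_eq_true_iff γ).not.mpr hγα) hy
  rw [wt_antipode] at hy'
  have hγ_le : wt γ ≤ s := wt_le_card γ
  calc hammingDist x y ≤ wt x + wt y := hammingDist_le_wt_add_wt x y
    _ ≤ d - s - wt γ := by omega

/-- Let `d` be even, `s` positive with `2s ≤ d`, and `γ ∈ I^s ∖ {α, ω}`.
For every `x ∈ B_α` and `y ∈ B_{γ̄}`, the Hamming distance satisfies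
`dist(x,y) ≤ d - s - |γ|`. -/
theorem dist_Balpha_Bgammabar (d s : ℕ) (hde : Even d) (hs : 0 < s) (hsd : 2 * s ≤ d)
    (γ : Fin s → Bool) (hγα : γ ≠ fun _ => false) (hγω : γ ≠ fun _ => true) :
    ∀ x ∈ Bset d (fun _ => false), ∀ y ∈ Bset d (antipode γ),
      hammingDist x y ≤ d - s - wt γ :=
  dist_Balpha_Bgammabar_general d s hsd γ hγα
end

section
/- For every positive integer d, n(d,d) = 2^d; that is, the maximum size of a family F of strings in S^d in which every two distinct members u, v satisfy 1 ≤ dist(u,v) ≤ d equals 2^d. -/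
lemma jDist_le {d : ℕ} (u v : JString d) : jDist u v ≤ d := by
  calc jDist u v ≤ (Finset.univ : Finset (Fin d)).card := Finset.card_filter_le _ _
  _ = d := by simp

/-- For every positive integer `d`, `n(d,d) = 2^d`. -/
theorem nkd_self (d : ℕ) (hd : 0 < d) : nkd d d = 2 ^ d := by
  have hub : ∀ m ∈ {m | ∃ F : Finset (JString d),
      (∀ u ∈ F, ∀ v ∈ F, u ≠ v → 1 ≤ jDist u v ∧ jDist u v ≤ d) ∧ F.card = m},
      m ≤ 2 ^ d := by
    rintro m ⟨F, hF, rfl⟩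
    have hinj : Set.InjOn (fun (u : JString d) (i : Fin d) => (u i).getD false) F := by
      intro u hu v hv huv
      by_contra hne
      obtain ⟨h1, -⟩ := hF u hu v hv hne
      rw [jDist, Finset.one_le_card] at h1
      obtain ⟨i, hi⟩ := h1
      simp only [Finset.mem_filter] at hi
      obtain ⟨-, a, b, ha, hb, hab⟩ := hi
      have := congrFun huv i
      simp only [ha, hb, Option.getD_some] at this
      exact hab this
    have := Finset.card_le_card_of_injOn _ (fun u _ => Finset.mem_univ _) hinj
    calc F.card ≤ (Finset.univ : Finset (Fin d → Bool)).card := this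
    _ = 2 ^ d := by simp
  have hmem : (2 ^ d) ∈ {m | ∃ F : Finset (JString d),
      (∀ u ∈ F, ∀ v ∈ F, u ≠ v → 1 ≤ jDist u v ∧ jDist u v ≤ d) ∧ F.card = m} := by
    refine ⟨Finset.univ.image (fun (f : Fin d → Bool) (i : Fin d) => some (f i)), ?_, ?_⟩
    · intro u hu v hv hne
      simp only [Finset.mem_image, Finset.mem_univ, true_and] at hu hv
      obtain ⟨f, rfl⟩ := hu
      obtain ⟨g, rfl⟩ := hv
      refine ⟨?_, jDist_le _ _⟩
      have hfg : f ≠ g := fun h => hne (by rw [h])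
      obtain ⟨i, hi⟩ := Function.ne_iff.mp hfg
      rw [jDist, Finset.one_le_card]
      exact ⟨i, Finset.mem_filter.mpr ⟨Finset.mem_univ _, f i, g i, rfl, rfl, hi⟩⟩
    · rw [Finset.card_image_of_injective]
      · simp
      · intro f g h
        funext i
        have := congrFun h i
        simpa using this
  refine le_antisymm (csSup_le ⟨2 ^ d, hmem⟩ hub) (le_csSup ⟨2 ^ d, hub⟩ hmem)
end

section
/- Suppose that for every 1 ≤ k ≤ d the inequality n(k,d) ≤ n(k-1, d-1) + n(k, d-1) holds, where by convention n(0,d) = 1 for all d ≥ 1 and n(k,d) = 2^d for k > d. Then for every fixed positive integer k there exists a constant C such that n(k,d) ≤ d^k/k! + C·d^{k-1} for all d ≥ k. -/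
lemma nkd_le_three_pow (k d : ℕ) : nkd k d ≤ 3 ^ d := by
  apply csSup_le'
  rintro m ⟨F, -, rfl⟩
  calc F.card ≤ Fintype.card (JString d) := Finset.card_le_univ F
    _ = 3 ^ d := by simp [JString, Fintype.card_fun]

lemma nkd_zero_le (d : ℕ) : nkd 0 d ≤ 1 := by
  apply csSup_le'
  rintro m ⟨F, hF, rfl⟩
  apply Finset.card_le_one.mpr
  intro a ha b hb
  by_contra hne
  have := hF a ha b hb hne
  omega

lemma succ_pow_ge (d n : ℕ) (hn : 1 ≤ n) : d ^ n + d ^ (n - 1) ≤ (d + 1) ^ n := by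
  obtain ⟨m, rfl⟩ := Nat.exists_eq_add_of_le hn
  simp only [Nat.add_sub_cancel_left, Nat.add_comm 1 m]
  calc d ^ (m + 1) + d ^ m = d ^ m * (d + 1) := by ring
    _ ≤ (d + 1) ^ m * (d + 1) := by
        exact Nat.mul_le_mul_right _ (Nat.pow_le_pow_left (Nat.le_succ d) m)
    _ = (d + 1) ^ (m + 1) := by ring

lemma nkd_nat_bound
    (hrec : ∀ k d : ℕ, 1 ≤ k → k ≤ d → nkd k d ≤ nkd (k - 1) (d - 1) + nkd k (d - 1)) :
    ∀ k : ℕ, 1 ≤ k → ∃ A : ℕ, ∀ d : ℕ, k ≤ d →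
      nkd k d ≤ d.choose k + A * d ^ (k - 1) := by
  intro k hk
  induction k, hk using Nat.le_induction with
  | base =>
    refine ⟨3, ?_⟩
    intro d hd
    induction d with
    | zero => omega
    | succ d ih =>
      rcases Nat.eq_or_lt_of_le hd with h | h
      · calc nkd 1 (d + 1) ≤ 3 ^ (d + 1) := nkd_le_three_pow 1 (d + 1)
          _ ≤ (d + 1).choose 1 + 3 * (d + 1) ^ (1 - 1) := by
            simp [← h]
      · have hd1 : 1 ≤ d := by omega
        have h1 := hrec 1 (d + 1) le_rfl (by omega)
        simp only [Nat.add_sub_cancel] at h1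
        have h2 := nkd_zero_le d
        have h3 := ih hd1
        norm_num at h1 h2 h3 ⊢
        omega
  | succ n hn ih =>
    obtain ⟨A, hA⟩ := ih
    refine ⟨3 ^ (n + 1) + A, ?_⟩
    intro d hd
    induction d with
    | zero => omega
    | succ d ihd =>
      rcases Nat.eq_or_lt_of_le hd with h | h
      · have h1 : nkd (n + 1) (d + 1) ≤ 3 ^ (n + 1) := by
          have := nkd_le_three_pow (n + 1) (d + 1); rw [← h] at this ⊢; exact this
        have h2 : (1 : ℕ) ≤ (d + 1) ^ (n + 1 - 1) := Nat.one_le_pow _ _ (by omega)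
        have h3 : (3 ^ (n + 1) + A) * 1 ≤ (3 ^ (n + 1) + A) * (d + 1) ^ (n + 1 - 1) :=
          Nat.mul_le_mul_left _ h2
        omega
      · have hd' : n + 1 ≤ d := by omega
        have h1 := hrec (n + 1) (d + 1) (by omega) (by omega)
        simp only [Nat.add_sub_cancel] at h1
        have h2 := hA d (by omega)
        have h3 := ihd hd'
        have hpas : (d + 1).choose (n + 1) = d.choose n + d.choose (n + 1) :=
          Nat.choose_succ_succ d n
        have hpow : d ^ n + d ^ (n - 1) ≤ (d + 1) ^ n := succ_pow_ge d n hn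
        simp only [Nat.add_sub_cancel] at *
        set B := 3 ^ (n + 1) + A with hB
        calc nkd (n + 1) (d + 1) ≤ nkd n d + nkd (n + 1) d := h1
          _ ≤ (d.choose n + A * d ^ (n - 1)) + (d.choose (n + 1) + B * d ^ n) :=
              Nat.add_le_add h2 h3
          _ ≤ (d + 1).choose (n + 1) + (B * d ^ n + B * d ^ (n - 1)) := by
              have : A * d ^ (n - 1) ≤ B * d ^ (n - 1) :=
                Nat.mul_le_mul_right _ (by rw [hB]; exact Nat.le_add_left A _)
              omega
          _ = (d + 1).choose (n + 1) + B * (d ^ n + d ^ (n - 1)) := by ring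
          _ ≤ (d + 1).choose (n + 1) + B * (d + 1) ^ n :=
              Nat.add_le_add_left (Nat.mul_le_mul_left _ hpow) _

/-- If `n(k,d) ≤ n(k-1, d-1) + n(k, d-1)` holds for all `1 ≤ k ≤ d`
(with `n(0,d) = 1` and `n(k,d) = 2^d` for `k > d`, which hold for `nkd`), then for every
fixed positive integer `k` there is a constant `C` with
`n(k,d) ≤ d^k / k! + C · d^{k-1}` for all `d ≥ k`. -/
theorem pascal_implies_asymptotics
    (hrec : ∀ k d : ℕ, 1 ≤ k → k ≤ d → nkd k d ≤ nkd (k - 1) (d - 1) + nkd k (d - 1))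
    (k : ℕ) (hk : 0 < k) :
    ∃ C : ℝ, ∀ d : ℕ, k ≤ d →
      (nkd k d : ℝ) ≤ (d : ℝ) ^ k / (Nat.factorial k : ℝ) + C * (d : ℝ) ^ (k - 1) := by
  obtain ⟨A, hA⟩ := nkd_nat_bound hrec k hk
  refine ⟨A, ?_⟩
  intro d hd
  have h1 := hA d hd
  have h2 : ((d.choose k : ℕ) : ℝ) ≤ (d : ℝ) ^ k / (Nat.factorial k : ℝ) := by
    have := Nat.choose_le_pow_div (α := ℝ) k d
    simpa using this
  have h3 : (nkd k d : ℝ) ≤ (d.choose k : ℝ) + (A : ℝ) * (d : ℝ) ^ (k - 1) := by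
    exact_mod_cast Nat.cast_le.mpr h1 |>.trans_eq (by push_cast; ring)
  linarith
end
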